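/- Let k be a field of characteristic 2, K = k(s), and M the k[x,y]/(x²,y²)-module with basis {u_i, v_i : i ≥ 0} and action x·u_i = v_i, y·u_i = v_{i−1}, x·v_i = y·v_i = 0. Then on End_k(M)_K = K ⊗_k End_k(M) with the diagonal action of k[x,y]/(x²,y²), the element 1 ⊗ id_M lies in the kernel of multiplication by x + sy but not in its image. -/

import Mathlib

open TensorProduct

/-- The underlying space of the Klein-four module `M` with basis `{uᵢ, vᵢ : i ≥ 0}`. -/
abbrev KleinM (k : Type*) [Field k] := ((ℕ →₀ k) × (ℕ →₀ k))

/-- Multiplication by `x`: `x·uᵢ = vᵢ`, `x·vᵢ = 0`. -/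
noncomputable def opX (k : Type*) [Field k] : KleinM k →ₗ[k] KleinM k :=
  (LinearMap.inr k (ℕ →₀ k) (ℕ →₀ k)).comp (LinearMap.fst k (ℕ →₀ k) (ℕ →₀ k))

/-- Multiplication by `y`: `y·uᵢ = vᵢ₋₁` (with `v₋₁ = 0`), `y·vᵢ = 0`. -/
noncomputable def opY (k : Type*) [Field k] : KleinM k →ₗ[k] KleinM k :=
  ((LinearMap.inr k (ℕ →₀ k) (ℕ →₀ k)).comp
    (Finsupp.lcomapDomain (fun n => n + 1) (add_left_injective 1))).comp
    (LinearMap.fst k (ℕ →₀ k) (ℕ →₀ k))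

/-- The diagonal action of `x` on `End_k(M)` (characteristic 2): `x·f = x∘f + f∘x`. -/
noncomputable def DX (k : Type*) [Field k] :
    (KleinM k →ₗ[k] KleinM k) →ₗ[k] (KleinM k →ₗ[k] KleinM k) :=
  LinearMap.llcomp k (KleinM k) (KleinM k) (KleinM k) (opX k) +
    LinearMap.lcomp k (KleinM k) (opX k)

/-- The diagonal action of `y` on `End_k(M)` (characteristic 2): `y·f = y∘f + f∘y`. -/
noncomputable def DY (k : Type*) [Field k] :
    (KleinM k →ₗ[k] KleinM k) →ₗ[k] (KleinM k →ₗ[k] KleinM k) :=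
  LinearMap.llcomp k (KleinM k) (KleinM k) (KleinM k) (opY k) +
    LinearMap.lcomp k (KleinM k) (opY k)

/-!
If `(x + s y) g = 1 ⊗ id`, read off from `g` the `K`-valued functionals
`cₙ = (f ↦ u₀-coefficient of f vₙ)` extended to `K ⊗ End_k(M)`. Since the images of `x`
and `y` have no `u`-component, the `u₀`-coefficient of `((x + s y) g)(uₙ)` is
`cₙ + s cₙ₋₁`, which must equal `δₙ₀`; in characteristic 2 this forces `cₙ = sⁿ`. But a
single tensor `g` has only finitely many `K`-coefficients, so all `cₙ` lie in one finitely
generated `k`-submodule of `K`, which then contains every power of the transcendental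
element `s`: impossible.
-/

open Module Submodule

theorem Module.Dual.baseChange_comp {R V W : Type*} (A : Type*) [CommSemiring R]
    [AddCommMonoid V] [Module R V] [AddCommMonoid W] [Module R W] [CommSemiring A] [Algebra R A]
    (φ : Dual R W) (D : V →ₗ[R] W) :
    Dual.baseChange A (φ ∘ₗ D) = Dual.baseChange A φ ∘ₗ D.baseChange A := by
  ext; simp

theorem Module.Dual.exists_fg_forall_baseChange_mem {R V A : Type*} [CommSemiring R]
    [AddCommMonoid V] [Module R V] [CommSemiring A] [Algebra R A] (x : A ⊗[R] V) :
    ∃ W : Submodule R A, W.FG ∧ ∀ φ : Dual R V, Dual.baseChange A φ x ∈ W := by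
  classical
  obtain ⟨S, rfl⟩ := TensorProduct.exists_finset x
  refine ⟨span R (S.image Prod.fst : Set A), fg_span (Finset.finite_toSet _), fun φ => ?_⟩
  simp only [map_sum, Dual.baseChange_apply_tmul]
  exact sum_mem fun i hi => smul_mem _ _ (subset_span (Finset.mem_image_of_mem _ hi))

theorem Transcendental.not_forall_pow_mem_of_fg {R A : Type*} [CommRing R] [IsNoetherianRing R]
    [Nontrivial R] [CommRing A] [Algebra R A] {a : A} (ha : Transcendental R a)
    {W : Submodule R A} (hW : W.FG) : ¬ ∀ n : ℕ, a ^ n ∈ W := by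
  intro hpow
  have hle : Subalgebra.toSubmodule (Algebra.adjoin R {a}) ≤ W := by
    rw [Algebra.adjoin_eq_span, ← Submonoid.powers_eq_closure, span_le]
    rintro _ ⟨n, rfl⟩
    exact hpow n
  exact ha (IsIntegral.of_mem_of_fg _ (hW.of_le hle) a
    (Algebra.self_mem_adjoin_singleton R a)).isAlgebraic

section KleinM

variable (k : Type*) [Field k]

noncomputable def basisU (n : ℕ) : KleinM k := (Finsupp.single n 1, 0)

noncomputable def basisV (n : ℕ) : KleinM k := (0, Finsupp.single n 1)

theorem opX_basisU (n : ℕ) : opX k (basisU k n) = basisV k n := by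
  simp [opX, basisU, basisV]

theorem opY_basisU_zero : opY k (basisU k 0) = 0 := by
  ext m <;> simp [opY, basisU]

theorem opY_basisU_succ (n : ℕ) : opY k (basisU k (n + 1)) = basisV k n := by
  ext m <;> simp [opY, basisU, basisV, Finsupp.single_apply]

theorem DX_id [CharP k 2] : DX k LinearMap.id = 0 := by
  refine LinearMap.ext fun w => ?_
  simp [DX, ← two_smul k, CharTwo.two_eq_zero]

theorem DY_id [CharP k 2] : DY k LinearMap.id = 0 := by
  refine LinearMap.ext fun w => ?_
  simp [DY, ← two_smul k, CharTwo.two_eq_zero]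

noncomputable def u₀Coeff : KleinM k →ₗ[k] Dual k (KleinM k →ₗ[k] KleinM k) :=
  LinearMap.applyₗ.compr₂ (Finsupp.lapply 0 ∘ₗ LinearMap.fst k _ _)

theorem u₀Coeff_apply (w : KleinM k) (f : KleinM k →ₗ[k] KleinM k) :
    u₀Coeff k w f = (f w).1 0 := rfl

theorem u₀Coeff_comp_DX (w : KleinM k) : u₀Coeff k w ∘ₗ DX k = u₀Coeff k (opX k w) := by
  ext1 f
  simp [u₀Coeff_apply, DX, opX]

theorem u₀Coeff_comp_DY (w : KleinM k) : u₀Coeff k w ∘ₗ DY k = u₀Coeff k (opY k w) := by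
  ext1 f
  simp [u₀Coeff_apply, DY, opY]

theorem u₀Coeff_baseChange_DX_add_smul_DY {A : Type*} [CommRing A] [Algebra k A] (a : A)
    (w : KleinM k) (g : A ⊗[k] (KleinM k →ₗ[k] KleinM k)) :
    Dual.baseChange A (u₀Coeff k w) (((DX k).baseChange A + a • (DY k).baseChange A) g) =
      Dual.baseChange A (u₀Coeff k (opX k w)) g +
        a * Dual.baseChange A (u₀Coeff k (opY k w)) g := by
  rw [← u₀Coeff_comp_DX, ← u₀Coeff_comp_DY, Dual.baseChange_comp, Dual.baseChange_comp]
  simp only [LinearMap.add_apply, LinearMap.smul_apply, map_add, map_smul, smul_eq_mul,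
    LinearMap.comp_apply]

end KleinM

/-- On `End_k(M)_K = K ⊗_k End_k(M)` with `K = k(s)` and the diagonal action of
`k[x,y]/(x²,y²)`, the element `1 ⊗ id_M` lies in the kernel of multiplication by `x + sy`
but not in its image. -/
theorem stmt13 (k : Type*) [Field k] [CharP k 2] :
    ((DX k).baseChange (RatFunc k) + (RatFunc.X : RatFunc k) • (DY k).baseChange (RatFunc k))
        ((1 : RatFunc k) ⊗ₜ[k] (LinearMap.id : KleinM k →ₗ[k] KleinM k)) = 0 ∧
      ((1 : RatFunc k) ⊗ₜ[k] (LinearMap.id : KleinM k →ₗ[k] KleinM k)) ∉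
        LinearMap.range ((DX k).baseChange (RatFunc k) +
          (RatFunc.X : RatFunc k) • (DY k).baseChange (RatFunc k)) := by
  refine ⟨by simp [DX_id, DY_id], ?_⟩
  rintro ⟨g, hg⟩
  set c : KleinM k → RatFunc k := fun w => Dual.baseChange (RatFunc k) (u₀Coeff k w) g
  have hc (w : KleinM k) : c (opX k w) + RatFunc.X * c (opY k w) = w.1 0 • 1 := by
    rw [← u₀Coeff_baseChange_DX_add_smul_DY, hg]
    simp [u₀Coeff_apply]
  have hpow (n : ℕ) : c (basisV k n) = RatFunc.X ^ n := by
    induction n with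
    | zero =>
      have h := hc (basisU k 0)
      rw [opX_basisU, opY_basisU_zero] at h
      simpa [basisU, c] using h
    | succ n ih =>
      have h := hc (basisU k (n + 1))
      rw [opX_basisU, opY_basisU_succ, ih] at h
      simp only [basisU, Finsupp.single_eq_of_ne (Nat.succ_ne_zero n).symm, zero_smul] at h
      rw [CharTwo.add_eq_zero.1 h, pow_succ']
  obtain ⟨W, hW, hmem⟩ := Dual.exists_fg_forall_baseChange_mem g
  exact (RatFunc.transcendental_X (K := k)).not_forall_pow_mem_of_fg hW fun n => hpow n ▸ hmem _
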